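/- For every n ∈ ℕ, the set ℓ∞ \ c is (n, 𝔠)-spaceable in ℓ∞: given any n-dimensional subspace Z of ℓ∞ with Z ∩ c = {0}, there exists a closed subspace F of ℓ∞ of dimension 𝔠 with Z ⊆ F and F ∩ c = {0}. -/

import Mathlib

open Filter Topology

/-- The space `ℓ∞` of bounded real sequences with the sup norm. -/
noncomputable abbrev EllInfty : Type := lp (fun _ : ℕ => ℝ) ⊤

/-- `c`, the subspace of `ℓ∞` of convergent sequences. -/
noncomputable def cConv : Submodule ℝ EllInfty where
  carrier := {x | ∃ l : ℝ, Tendsto (fun n => x n) atTop (𝓝 l)}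
  add_mem' := by
    rintro x y ⟨l, hl⟩ ⟨m, hm⟩
    exact ⟨l + m, by simpa using hl.add hm⟩
  zero_mem' := ⟨0, by simp⟩
  smul_mem' := by
    rintro c x ⟨l, hl⟩
    exact ⟨c * l, by simpa using hl.const_mul c⟩

/-!
Choose a subsequence `g` along which every element of the finite-dimensional space `Z`
converges (Bolzano–Weierstrass for a finite spanning set). Let `U : ℓ∞ → ℓ∞` be the isometry
writing `(-1) ^ j * x i` at position `g (Nat.pair i j)` and `0` off the range of `g`, and put
`F = Z + U(ℓ∞)`. It is closed, being a finite-dimensional extension of a closed subspace, and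
`dim F = dim ℓ∞ = 𝔠`, the geometric sequences `(t ^ k)` with `0 < t < 1` being independent.
If `z + U x` converges, then `U x` converges along `g`, so every `x i` equals its own negative;
hence `x = 0` and `z ∈ Z ∩ c = 0`.
-/

open Cardinal Function

theorem Submodule.isClosed_sup_of_finiteDimensional {𝕜 E : Type*} [NontriviallyNormedField 𝕜]
    [CompleteSpace 𝕜] [AddCommGroup E] [TopologicalSpace E] [IsTopologicalAddGroup E]
    [Module 𝕜 E] [ContinuousSMul 𝕜 E] (Z W : Submodule 𝕜 E) [FiniteDimensional 𝕜 Z]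
    (hW : IsClosed (W : Set E)) : IsClosed ((Z ⊔ W : Submodule 𝕜 E) : Set E) := by
  have : IsClosed (W : Set E) := hW -- makes `E ⧸ W` Hausdorff
  rw [sup_comm, ← Submodule.comap_map_mkQ]
  exact (Submodule.closed_of_finiteDimensional (Z.map W.mkQ)).preimage continuous_quot_mk

theorem Submodule.rank_eq_of_range_le {R M : Type*} [Ring R] [StrongRankCondition R]
    [AddCommGroup M] [Module R M] {f : M →ₗ[R] M} (hf : Injective f) {F : Submodule R M}
    (h : LinearMap.range f ≤ F) : Module.rank R F = Module.rank R M :=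
  le_antisymm (Submodule.rank_le F)
    ((rank_range_of_injective f hf).symm.le.trans (Submodule.rank_mono h))

noncomputable def convergentAlong (g : ℕ → ℕ) : Submodule ℝ EllInfty where
  carrier := {x | ∃ l : ℝ, Tendsto (fun k => x (g k)) atTop (𝓝 l)}
  add_mem' := by
    rintro x y ⟨l, hl⟩ ⟨m, hm⟩
    exact ⟨l + m, by simpa using hl.add hm⟩
  zero_mem' := ⟨0, by simp⟩
  smul_mem' := by
    rintro c x ⟨l, hl⟩
    exact ⟨c * l, by simpa using hl.const_mul c⟩

theorem cConv_le_convergentAlong {g : ℕ → ℕ} (hg : Tendsto g atTop atTop) :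
    cConv ≤ convergentAlong g :=
  fun _ ⟨l, hl⟩ => ⟨l, hl.comp hg⟩

theorem exists_strictMono_le_convergentAlong (Z : Submodule ℝ EllInfty) [FiniteDimensional ℝ Z] :
    ∃ g : ℕ → ℕ, StrictMono g ∧ Z ≤ convergentAlong g := by
  obtain ⟨S, rfl⟩ := (Submodule.fg_iff_finiteDimensional Z).2 ‹_›
  have hbdd : Bornology.IsBounded
      (Set.univ.pi fun s : S => Metric.closedBall (0 : ℝ) ‖(s : EllInfty)‖) :=
    Bornology.IsBounded.pi fun _ => Metric.isBounded_closedBall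
  -- Bolzano–Weierstrass in the finite-dimensional space `S → ℝ`
  obtain ⟨a, -, g, hg, ha⟩ := tendsto_subseq_of_bounded hbdd
    (x := fun k (s : S) => (s : EllInfty) k) fun k => Set.mem_univ_pi.2 fun s =>
      mem_closedBall_zero_iff.2 (lp.norm_apply_le_norm ENNReal.top_ne_zero _ k)
  exact ⟨g, hg, Submodule.span_le.2 fun s hs => ⟨a ⟨s, hs⟩, tendsto_pi_nhds.1 ha ⟨s, hs⟩⟩⟩

noncomputable def alternating : (ℕ → ℝ) →ₗ[ℝ] ℕ → ℝ where
  toFun x k := (-1) ^ (Nat.unpair k).2 * x (Nat.unpair k).1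
  map_add' x y := by ext; simp [mul_add]
  map_smul' c x := by ext; simp [mul_left_comm]

theorem alternating_pair (x : ℕ → ℝ) (i j : ℕ) :
    alternating x (Nat.pair i j) = (-1) ^ j * x i := by
  simp [alternating]

theorem abs_alternating (x : ℕ → ℝ) (k : ℕ) : |alternating x k| = |x (Nat.unpair k).1| := by
  simp [alternating, abs_mul]

theorem eq_zero_of_tendsto_alternating {x : ℕ → ℝ} {L : ℝ}
    (h : Tendsto (alternating x) atTop (𝓝 L)) : x = 0 := by
  funext i
  have hrow : Tendsto (fun j => (-1 : ℝ) ^ j * x i) atTop (𝓝 L) := by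
    simpa only [Function.comp_def, alternating_pair] using
      h.comp (strictMono_nat_of_lt_succ fun j =>
        Nat.pair_lt_pair_right i j.lt_succ_self).tendsto_atTop
  have hL : L = 0 := by
    have hshift : Tendsto (fun j => (-1 : ℝ) ^ (j + 1) * x i) atTop (𝓝 (-L)) := by
      simpa [pow_succ] using hrow.neg
    linarith [tendsto_nhds_unique ((tendsto_add_atTop_iff_nat 1).2 hrow) hshift]
  have habs : Tendsto (fun _ : ℕ => |x i|) atTop (𝓝 |L|) := by
    simpa [abs_mul] using hrow.abs
  simpa [hL] using tendsto_nhds_unique tendsto_const_nhds habs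

noncomputable def oscillating (g : ℕ → ℕ) : (ℕ → ℝ) →ₗ[ℝ] ℕ → ℝ :=
  ExtendByZero.linearMap ℝ g ∘ₗ alternating

theorem oscillating_apply {g : ℕ → ℕ} (hg : Injective g) (x : ℕ → ℝ) (k : ℕ) :
    oscillating g x (g k) = alternating x k :=
  hg.extend_apply _ _ _

theorem norm_oscillating_apply_le {g : ℕ → ℕ} (hg : Injective g) (x : EllInfty) (m : ℕ) :
    ‖oscillating g x m‖ ≤ ‖x‖ := by
  by_cases hm : ∃ k, g k = m
  · obtain ⟨k, rfl⟩ := hm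
    rw [oscillating_apply hg, Real.norm_eq_abs, abs_alternating]
    exact lp.norm_apply_le_norm ENNReal.top_ne_zero x _
  · simp [oscillating, extend_apply' _ _ _ hm]

noncomputable def oscillatingEmbedding {g : ℕ → ℕ} (hg : Injective g) :
    EllInfty →ₗᵢ[ℝ] EllInfty where
  toFun x := ⟨oscillating g x,
    memℓp_infty ⟨‖x‖, by rintro _ ⟨m, rfl⟩; exact norm_oscillating_apply_le hg x m⟩⟩
  map_add' x y := lp.ext <| by simp only [lp.coeFn_add, map_add]
  map_smul' c x := lp.ext <| by simp only [lp.coeFn_smul, map_smul, RingHom.id_apply]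
  norm_map' x := by
    refine le_antisymm (lp.norm_le_of_forall_le (norm_nonneg x) (norm_oscillating_apply_le hg x))
      (lp.norm_le_of_forall_le (norm_nonneg _) fun i => ?_)
    calc ‖x i‖ = ‖oscillating g x (g (Nat.pair i 0))‖ := by
          rw [oscillating_apply hg, alternating_pair, pow_zero, one_mul]
      _ ≤ _ := lp.norm_apply_le_norm (E := fun _ : ℕ => ℝ) ENNReal.top_ne_zero
          ⟨oscillating g x, _⟩ (g (Nat.pair i 0))

theorem eq_zero_of_oscillatingEmbedding_mem {g : ℕ → ℕ} (hg : Injective g) {x : EllInfty}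
    (h : oscillatingEmbedding hg x ∈ convergentAlong g) : x = 0 := by
  obtain ⟨L, hL⟩ := h
  exact lp.ext (eq_zero_of_tendsto_alternating (hL.congr (oscillating_apply hg x)))

theorem sup_range_oscillatingEmbedding_inf_cConv {g : ℕ → ℕ} (hg : StrictMono g)
    {Z : Submodule ℝ EllInfty} (hZg : Z ≤ convergentAlong g) (hZ : Z ⊓ cConv = ⊥) :
    (Z ⊔ LinearMap.range (oscillatingEmbedding hg.injective).toLinearMap) ⊓ cConv = ⊥ := by
  rw [eq_bot_iff]
  rintro _ ⟨hy, hyc⟩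
  obtain ⟨z, hz, _, ⟨x, rfl⟩, rfl⟩ := Submodule.mem_sup.1 hy
  have hx : x = 0 := by
    refine eq_zero_of_oscillatingEmbedding_mem hg.injective ?_
    simpa using sub_mem (cConv_le_convergentAlong hg.tendsto_atTop hyc) (hZg hz)
  subst hx
  rw [← hZ]
  simpa using And.intro hz hyc

noncomputable def geometric (t : Set.Ioo (0 : ℝ) 1) : EllInfty :=
  ⟨fun k => (t : ℝ) ^ k, memℓp_infty ⟨1, by
    rintro _ ⟨k, rfl⟩
    simpa [abs_of_pos t.2.1] using pow_le_one₀ t.2.1.le t.2.2.le⟩⟩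

theorem linearIndependent_geometric : LinearIndependent ℝ geometric := by
  have hpow : LinearIndependent ℝ fun t : Set.Ioo (0 : ℝ) 1 => ⇑(powersHom ℝ t) :=
    (linearIndependent_monoidHom (Multiplicative ℕ) ℝ).comp _
      fun s t hst => Subtype.ext ((powersHom ℝ).injective hst)
  have := hpow.map' (LinearMap.funLeft ℝ ℝ Multiplicative.ofAdd) (LinearMap.ker_eq_bot.2
    (LinearMap.funLeft_injective_of_surjective _ _ _ Multiplicative.ofAdd.surjective))
  exact LinearIndependent.of_comp (LinearMap.pi fun k => lp.evalₗ (fun _ : ℕ => ℝ) ⊤ k) this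

theorem rank_ellInfty : Module.rank ℝ EllInfty = 𝔠 := by
  refine le_antisymm ?_ ?_
  · calc Module.rank ℝ EllInfty ≤ #EllInfty := rank_le_card ℝ EllInfty
      _ ≤ #(ℕ → ℝ) := mk_le_of_injective fun _ _ => lp.ext
      _ = 𝔠 := by simp [mk_real]
  · simpa [mk_Ioo_real zero_lt_one] using linearIndependent_geometric.cardinal_le_rank

/-- `ℓ∞ \ c` is `(n, 𝔠)`-spaceable for every `n ∈ ℕ`. -/
theorem stmt9 (n : ℕ) (Z : Submodule ℝ EllInfty) (hZdim : Module.rank ℝ Z = n)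
    (hZ : Z ⊓ cConv = ⊥) :
    ∃ F : Submodule ℝ EllInfty, IsClosed (F : Set EllInfty) ∧
      Module.rank ℝ F = Cardinal.continuum ∧ Z ≤ F ∧ F ⊓ cConv = ⊥ := by
  have : FiniteDimensional ℝ Z := FiniteDimensional.of_rank_eq_nat hZdim
  obtain ⟨g, hg, hZg⟩ := exists_strictMono_le_convergentAlong Z
  let U := oscillatingEmbedding hg.injective
  refine ⟨Z ⊔ LinearMap.range U.toLinearMap, ?_, ?_, le_sup_left,
    sup_range_oscillatingEmbedding_inf_cConv hg hZg hZ⟩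
  · refine Submodule.isClosed_sup_of_finiteDimensional _ _ ?_
    rw [LinearMap.coe_range]
    exact U.isometry.isClosedEmbedding.isClosed_range
  · rw [Submodule.rank_eq_of_range_le U.injective le_sup_right, rank_ellInfty]
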